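/- Let G be any group, let Y be a central subgroup of G, and let X be a normal subgroup of G containing Y. Then the group of all automorphisms of G that restrict to the identity on X and induce the identity map on G/Y is isomorphic to Hom(G/X, Y). -/

import Mathlib

/-!
For `α` fixing `X` and trivial modulo the central subgroup `Y`, the displacement `g ↦ g⁻¹ α g`
is a homomorphism `G → Y` (centrality) which kills `X`, so it factors through `G ⧸ X`.
Conversely, for `f : G ⧸ X →* Y` the map `g ↦ g · f(gX)` is an automorphism: it is an
endomorphism because `f` is central-valued, and `g ↦ g · f(gX)⁻¹` inverts it because `f` kills
`Y ≤ X`. Composition of automorphisms becomes pointwise multiplication of displacements, since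
`α (β g) = α (g · g⁻¹ β g) = α g · g⁻¹ β g` when `α` fixes `Y`.
-/

/-- A subgroup contained in the center is a commutative group. -/
@[reducible]
def centralCommGroup {G : Type*} [Group G] {H : Subgroup G}
    (h : H ≤ Subgroup.center G) : CommGroup H :=
  { (inferInstance : Group H) with
    mul_comm := fun a b => Subtype.ext (by
      simpa using ((Subgroup.mem_center_iff.mp (h a.2)) (b : G)).symm) }

open QuotientGroup

namespace MulAut

variable {G : Type*} [Group G]

def inducingIdMod (Y : Subgroup G) : Subgroup (MulAut G) where
  carrier := {α | ∀ g, g⁻¹ * α g ∈ Y}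
  one_mem' g := by simp [Y.one_mem]
  mul_mem' {a b} ha hb g := by
    have h : g⁻¹ * (a * b) g = (g⁻¹ * b g) * ((b g)⁻¹ * a (b g)) := by
      rw [mul_apply]; group
    exact h ▸ Y.mul_mem (hb g) (ha (b g))
  inv_mem' {a} ha g := by
    simpa using Y.inv_mem (ha (a⁻¹ g))

theorem mem_inducingIdMod {Y : Subgroup G} {α : MulAut G} :
    α ∈ inducingIdMod Y ↔ ∀ g, g⁻¹ * α g ∈ Y :=
  Iff.rfl

theorem mem_fixingSubgroup_iff {X : Set G} {α : MulAut G} :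
    α ∈ fixingSubgroup (MulAut G) X ↔ ∀ x ∈ X, α x = x :=
  _root_.mem_fixingSubgroup_iff _

variable {Y : Subgroup G} (hY : Y ≤ Subgroup.center G)

def displacement (α : MulAut G) (hα : α ∈ inducingIdMod Y) : G →* Y where
  toFun g := ⟨g⁻¹ * α g, hα g⟩
  map_one' := by ext; simp
  map_mul' a b := by
    ext
    have hcomm : b⁻¹ * (a⁻¹ * α a) = (a⁻¹ * α a) * b⁻¹ :=
      Subgroup.mem_center_iff.mp (hY (hα a)) b⁻¹
    calc (a * b)⁻¹ * α (a * b) = b⁻¹ * (a⁻¹ * α a) * α b := by rw [map_mul]; group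
      _ = (a⁻¹ * α a) * (b⁻¹ * α b) := by rw [hcomm]; group

@[simp]
theorem coe_displacement_apply (α : MulAut G) (hα : α ∈ inducingIdMod Y) (g : G) :
    (displacement hY α hα g : G) = g⁻¹ * α g :=
  rfl

theorem le_ker_displacement {X : Subgroup G} {α : MulAut G}
    (hαX : α ∈ fixingSubgroup (MulAut G) (X : Set G)) (hα : α ∈ inducingIdMod Y) :
    X ≤ (displacement hY α hα).ker := fun x hx => by
  ext
  simp [mem_fixingSubgroup_iff.mp hαX x hx]

theorem displacement_mul {α β : MulAut G} (hαY : α ∈ fixingSubgroup (MulAut G) (Y : Set G))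
    (hα : α ∈ inducingIdMod Y) (hβ : β ∈ inducingIdMod Y) (g : G) :
    displacement hY (α * β) (mul_mem hα hβ) g =
      displacement hY α hα g * displacement hY β hβ g := by
  ext
  have hβg : β g = g * (g⁻¹ * β g) := by group
  calc g⁻¹ * α (β g) = g⁻¹ * (α g * (g⁻¹ * β g)) := by
        rw [hβg, map_mul, mem_fixingSubgroup_iff.mp hαY _ (hβ g)]; group
    _ = (g⁻¹ * α g) * (g⁻¹ * β g) := by group

def ofCentralHom (f : G →* Y) (hf : Y ≤ f.ker) : MulAut G where
  toFun g := g * f g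
  invFun g := g * (f g)⁻¹
  left_inv g := by simp [MonoidHom.mem_ker.mp (hf (f g).2)]
  right_inv g := by simp [MonoidHom.mem_ker.mp (hf (f g).2)]
  map_mul' a b := by
    have hcomm : b * f a = f a * b := Subgroup.mem_center_iff.mp (hY (f a).2) b
    calc a * b * ↑(f (a * b)) = a * (b * f a) * f b := by simp [mul_assoc]
      _ = a * f a * (b * f b) := by rw [hcomm]; group

@[simp]
theorem ofCentralHom_apply (f : G →* Y) (hf : Y ≤ f.ker) (g : G) :
    ofCentralHom hY f hf g = g * f g :=
  rfl

theorem ofCentralHom_mem_fixingSubgroup {X : Subgroup G} (f : G →* Y) (hf : Y ≤ f.ker)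
    (hXf : X ≤ f.ker) : ofCentralHom hY f hf ∈ fixingSubgroup (MulAut G) (X : Set G) :=
  mem_fixingSubgroup_iff.mpr fun x hx => by simp [MonoidHom.mem_ker.mp (hXf hx)]

theorem ofCentralHom_mem_inducingIdMod (f : G →* Y) (hf : Y ≤ f.ker) :
    ofCentralHom hY f hf ∈ inducingIdMod Y :=
  fun g => by simp

end MulAut

open MulAut

theorem aut_fixing_X_inducing_id_modY_iso_hom (G : Type*) [Group G]
    (X Y : Subgroup G) [X.Normal] (hY : Y ≤ Subgroup.center G) (hYX : Y ≤ X) :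
    letI : CommGroup Y := centralCommGroup hY
    ∃ S : Subgroup (MulAut G),
      (∀ α : MulAut G, α ∈ S ↔ (∀ x ∈ X, α x = x) ∧ ∀ g : G, g⁻¹ * α g ∈ Y) ∧
      Nonempty (S ≃* ((G ⧸ X) →* Y)) := by
  let : CommGroup Y := centralCommGroup hY
  refine ⟨fixingSubgroup (MulAut G) (X : Set G) ⊓ inducingIdMod Y,
    fun α => by rw [Subgroup.mem_inf, mem_fixingSubgroup_iff, mem_inducingIdMod]; rfl, ⟨?_⟩⟩
  have hker (φ : G ⧸ X →* Y) : X ≤ (φ.comp (mk' X)).ker := fun x hx => by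
    simp [(eq_one_iff x).mpr hx]
  exact
    { toFun := fun α => lift X (displacement hY α α.2.2) (le_ker_displacement hY α.2.1 α.2.2)
      invFun := fun φ => ⟨ofCentralHom hY _ (hYX.trans (hker φ)),
        ofCentralHom_mem_fixingSubgroup hY _ _ (hker φ), ofCentralHom_mem_inducingIdMod hY _ _⟩
      left_inv := fun α => Subtype.ext <| MulEquiv.ext fun g => by simp
      right_inv := fun φ => monoidHom_ext _ <| MonoidHom.ext fun g => Subtype.ext <| by simp
      map_mul' := fun α β => monoidHom_ext _ <| MonoidHom.ext fun g => by
        simpa using displacement_mul hY (fixingSubgroup_antitone _ _ hYX α.2.1) α.2.2 β.2.2 g }
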